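/- arXiv:2410.15079 — 2 statements merged into one kernel-verified Lean document; each statement's English description precedes it below -/
import Mathlib

section
/- Suppose 0 < λ < 1 and Φⱼ, Φⱼ₊₁ are real with 0 < Φⱼ ≤ 1, Φⱼ < Φⱼ₊₁ ≤ 2Φⱼ, and Φⱼ₊₁ - Φⱼ ≤ -(8/3)·log λ - (8/3)·log(cos(7Φⱼ/8)). Then for every θ ∈ ℝ: 1 - λ·exp(-(Φⱼ₊₁-Φⱼ)·(3/8)·sin θ)·cos(Φⱼ + (Φⱼ₊₁-Φⱼ)·((5/8)·cos θ + 1/2)) > 0. -/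
/-!
Write `t = Φⱼ₊₁ - Φⱼ ∈ (0, Φⱼ]`. The cosine's argument lies in `[Φⱼ - t/8, Φⱼ + 9t/8] ⊆ [7Φⱼ/8, π]`,
so the cosine is at most `cos (7Φⱼ/8)`, while the exponential is at most `exp (3t/8)`; the step
hypothesis says exactly that `λ · exp (3t/8) · cos (7Φⱼ/8) ≤ 1`. At least one of the two bounds is
strict, because `sin θ` and `cos θ` cannot both equal `-1`.
-/

open Real

lemma mul_exp_mul_le_one_of_le_neg_log {a c x : ℝ} (ha : 0 < a) (hc : 0 < c)
    (h : x ≤ -log a - log c) : a * exp x * c ≤ 1 := by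
  calc a * exp x * c = exp (log a + x + log c) := by
        rw [exp_add, exp_add, exp_log ha, exp_log hc]
    _ ≤ exp 0 := exp_le_exp.2 (by linarith)
    _ = 1 := exp_zero

lemma exp_neg_mul_sin_le {k : ℝ} (hk : 0 ≤ k) (θ : ℝ) : exp (-k * sin θ) ≤ exp k :=
  exp_le_exp.2 (by nlinarith [neg_one_le_sin θ])

lemma exp_neg_mul_sin_lt {k θ : ℝ} (hk : 0 < k) (hθ : -1 < sin θ) : exp (-k * sin θ) < exp k :=
  exp_lt_exp.2 (by nlinarith)

section ShiftedCos

variable {Φ t c : ℝ} (hΦ : 0 < Φ) (hΦ1 : Φ ≤ 1) (htΦ : t ≤ Φ) (hc : c ≤ 1)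
include hΦ hΦ1 htΦ hc

lemma cos_add_mul_le_cos_seven_eighths (ht : 0 ≤ t) (hc' : -1 ≤ c) :
    cos (Φ + t * (5/8 * c + 1/2)) ≤ cos (7 * Φ / 8) :=
  cos_le_cos_of_nonneg_of_le_pi (by linarith) (by nlinarith [pi_gt_three]) (by nlinarith)

lemma cos_add_mul_lt_cos_seven_eighths (ht : 0 < t) (hc' : -1 < c) :
    cos (Φ + t * (5/8 * c + 1/2)) < cos (7 * Φ / 8) :=
  cos_lt_cos_of_nonneg_of_le_pi (by linarith) (by nlinarith [pi_gt_three]) (by nlinarith)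

end ShiftedCos

lemma exp_mul_cos_lt {Φ t θ : ℝ} (hΦ : 0 < Φ) (hΦ1 : Φ ≤ 1) (ht : 0 < t) (htΦ : t ≤ Φ)
    (hpos : 0 < cos (Φ + t * (5/8 * cos θ + 1/2))) :
    exp (-t * (3/8) * sin θ) * cos (Φ + t * (5/8 * cos θ + 1/2)) <
      exp (t * (3/8)) * cos (7 * Φ / 8) := by
  rw [neg_mul]
  have hk : 0 < t * (3/8) := by positivity
  rcases (neg_one_le_sin θ).eq_or_lt with hsin | hsin
  · have hcos : -1 < cos θ := by nlinarith [sin_sq_add_cos_sq θ, neg_one_le_cos θ]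
    exact mul_lt_mul' (exp_neg_mul_sin_le hk.le θ)
      (cos_add_mul_lt_cos_seven_eighths hΦ hΦ1 htΦ (cos_le_one θ) ht hcos) hpos.le (exp_pos _)
  · exact mul_lt_mul (exp_neg_mul_sin_lt hk hsin)
      (cos_add_mul_le_cos_seven_eighths hΦ hΦ1 htΦ (cos_le_one θ) ht.le (neg_one_le_cos θ))
      hpos (exp_pos _).le

theorem stmt_6_general (lam Φj Φj1 : ℝ) (hlam0 : 0 < lam)
    (hΦj0 : 0 < Φj) (hΦj1 : Φj ≤ 1) (hlt : Φj < Φj1) (hle : Φj1 ≤ 2 * Φj)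
    (hstep : Φj1 - Φj ≤ -(8/3) * Real.log lam - (8/3) * Real.log (Real.cos (7 * Φj / 8)))
    (θ : ℝ) :
    1 - lam * Real.exp (-(Φj1 - Φj) * (3/8) * Real.sin θ) *
        Real.cos (Φj + (Φj1 - Φj) * ((5/8) * Real.cos θ + 1/2)) > 0 := by
  set t := Φj1 - Φj
  have hc7 : 0 < cos (7 * Φj / 8) :=
    cos_pos_of_mem_Ioo ⟨by linarith [pi_gt_three], by linarith [pi_gt_three]⟩
  have hkey : lam * exp (t * (3/8)) * cos (7 * Φj / 8) ≤ 1 :=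
    mul_exp_mul_le_one_of_le_neg_log hlam0 hc7 (by linarith)
  rcases le_or_gt (cos (Φj + t * (5/8 * cos θ + 1/2))) 0 with hneg | hpos
  · have := mul_nonpos_of_nonneg_of_nonpos
      (by positivity : 0 ≤ lam * exp (-t * (3/8) * sin θ)) hneg
    linarith
  · have := mul_lt_mul_of_pos_left
      (exp_mul_cos_lt hΦj0 hΦj1 (by linarith : 0 < t) (by linarith) hpos) hlam0
    rw [mul_assoc] at hkey ⊢
    linarith

theorem stmt_6 (lam Φj Φj1 : ℝ) (hlam0 : 0 < lam) (hlam1 : lam < 1)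
    (hΦj0 : 0 < Φj) (hΦj1 : Φj ≤ 1) (hlt : Φj < Φj1) (hle : Φj1 ≤ 2 * Φj)
    (hstep : Φj1 - Φj ≤ -(8/3) * Real.log lam - (8/3) * Real.log (Real.cos (7 * Φj / 8)))
    (θ : ℝ) :
    1 - lam * Real.exp (-(Φj1 - Φj) * (3/8) * Real.sin θ) *
        Real.cos (Φj + (Φj1 - Φj) * ((5/8) * Real.cos θ + 1/2)) > 0 :=
  stmt_6_general lam Φj Φj1 hlam0 hΦj0 hΦj1 hlt hle hstep θ
end

section
/- For all θ ∈ ℝ and all Φ ∈ [1/2, 1], the quantity G(Φ,θ) := (3/8)·sin θ·cos(Φ·(3/2 + (5/8)·cos θ)) + (3/2 + (5/8)·cos θ)·sin(Φ·(3/2 + (5/8)·cos θ)) is strictly positive. -/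
/-! With `c = 3/2 + (5/8) cos θ ∈ [7/8, 17/8]` and `x = Φ c ∈ [7/16, 17/8] ⊆ [7/16, π - 7/16]`,
we get `sin x ≥ sin (7/16) > 2/5`. Then `sin² x > 4/25` forces `3 |cos x| < 7 sin x`, so the
first term, at least `-(3/8) |cos x|`, is beaten by the second, at least `(7/8) sin x`. -/

open Real

lemma sin_le_sin_of_le_of_le_pi_sub {a x : ℝ} (ha : -(π / 2) ≤ a) (hax : a ≤ x)
    (hxa : x ≤ π - a) : sin a ≤ sin x := by
  rcases le_or_gt x (π / 2) with hx | hx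
  · exact sin_le_sin_of_le_of_le_pi_div_two ha hx hax
  · rw [← sin_pi_sub x]
    exact sin_le_sin_of_le_of_le_pi_div_two ha (by linarith) (by linarith)

lemma two_fifths_lt_sin_seven_sixteenths : (2 / 5 : ℝ) < sin (7 / 16) := by
  have := sin_gt_sub_cube (by norm_num : (0 : ℝ) < 7 / 16)
  linarith

lemma three_mul_abs_cos_lt_seven_mul_sin {x : ℝ} (hx : 2 / 5 ≤ sin x) :
    3 * |cos x| < 7 * sin x := by
  have hsq : (3 * cos x) ^ 2 < (7 * sin x) ^ 2 := by nlinarith [sin_sq_add_cos_sq x]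
  rw [← abs_of_pos (by norm_num : (0 : ℝ) < 3), ← abs_mul]
  exact abs_lt_of_sq_lt_sq hsq (by linarith)

theorem stmt_7 (θ Φ : ℝ) (h0 : 1/2 ≤ Φ) (h1 : Φ ≤ 1) :
    0 < (3/8) * Real.sin θ * Real.cos (Φ * (3/2 + (5/8) * Real.cos θ)) +
        (3/2 + (5/8) * Real.cos θ) * Real.sin (Φ * (3/2 + (5/8) * Real.cos θ)) := by
  have hc : 7 / 8 ≤ 3/2 + (5/8) * cos θ ∧ 3/2 + (5/8) * cos θ ≤ 17 / 8 := by
    constructor <;> linarith [neg_one_le_cos θ, cos_le_one θ]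
  set c := 3/2 + (5/8) * cos θ
  set x := Φ * c
  have hx : 7 / 16 ≤ x ∧ x ≤ 17 / 8 := by
    constructor <;> nlinarith
  have hsin : 2 / 5 ≤ sin x :=
    two_fifths_lt_sin_seven_sixteenths.le.trans <|
      sin_le_sin_of_le_of_le_pi_sub (by linarith [pi_pos]) hx.1 (by linarith [pi_gt_three])
  have hfirst : -|cos x| ≤ sin θ * cos x := by
    refine neg_abs_le _ |>.trans' (neg_le_neg ?_)
    rw [abs_mul]
    exact mul_le_of_le_one_left (abs_nonneg _) (abs_sin_le_one θ)
  have hsecond : 7 / 8 * sin x ≤ c * sin x := mul_le_mul_of_nonneg_right hc.1 (by linarith)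
  linarith [three_mul_abs_cos_lt_seven_mul_sin hsin]
end
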